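/- Let G = (V,E) be an M weight-bounded linear graph (nodes {1,...,n}), let ts : V → ℝ be slowly monotone, and define tsm(v) = ⌊ts(v)⌋ mod M. Define dtsm(u,v) = (tsm(v) - tsm(u)) mod M and, for u ≤ v, dtsm+(u,v) = min(M, Σ_{i=u}^{v-1} dtsm(i, i+1)). Then for all u ≤ v, dtsm+(u,v) = min(⌊ts(v)⌋ - ⌊ts(u)⌋, M). -/
import Mathlib


open Finset

/-- A weighted constraint edge: `ts tgt - ts src ◁ wt` where ◁ is `<` if `strict` else `≤`. -/
structure WEdge where
  src : ℕ
  strict : Bool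
  wt : ℤ
  tgt : ℕ
deriving DecidableEq

/-- `ts` satisfies the constraint of edge `e`. -/
def satEdge (ts : ℕ → ℝ) (e : WEdge) : Prop :=
  if e.strict then ts e.tgt - ts e.src < (e.wt : ℝ) else ts e.tgt - ts e.src ≤ (e.wt : ℝ)

/-- `ts` realizes the linear weighted graph on vertices `{1,…,n}` with edge set `E`:
monotone w.r.t. the linear order and all difference constraints hold. -/
def Realizes (n : ℕ) (E : Finset WEdge) (ts : ℕ → ℝ) : Prop :=
  (∀ u v : ℕ, 1 ≤ u → u ≤ v → v ≤ n → ts u ≤ ts v) ∧ ∀ e ∈ E, satEdge ts e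

/-- Integer parts of consecutive time-stamps differ by at least 0 and at most `M - 1`. -/
def SlowlyMonotone (M : ℤ) (n : ℕ) (ts : ℕ → ℝ) : Prop :=
  ∀ i : ℕ, 1 ≤ i → i < n → 0 ≤ ⌊ts (i + 1)⌋ - ⌊ts i⌋ ∧ ⌊ts (i + 1)⌋ - ⌊ts i⌋ ≤ M - 1

/-- All edges of the graph have endpoints in `{1,…,n}`. -/
def InGraph (n : ℕ) (E : Finset WEdge) : Prop :=
  ∀ e ∈ E, 1 ≤ e.src ∧ e.src ≤ n ∧ 1 ≤ e.tgt ∧ e.tgt ≤ n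

/-- `M` weight-bounded: all weights have absolute value at most `M - 1`. -/
def WtBounded (M : ℤ) (E : Finset WEdge) : Prop := ∀ e ∈ E, |e.wt| ≤ M - 1

/-- `dtsm(u,v) = (tsm v - tsm u) mod M`. -/
def dtsm (M : ℤ) (tsm : ℕ → ℤ) (u v : ℕ) : ℤ := (tsm v - tsm u) % M

/-- `dtsm⁺(u,v)`, for `u ≤ v`: the cumulative sum of consecutive `dtsm`'s, capped at `M`. -/
def dtsmP (M : ℤ) (tsm : ℕ → ℤ) (u v : ℕ) : ℤ :=
  min M (∑ i ∈ Finset.Ico u v, dtsm M tsm i (i + 1))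

/-- Antisymmetric extension of `dtsm⁺` to arbitrary pairs. -/
def dtsmE (M : ℤ) (tsm : ℕ → ℤ) (u v : ℕ) : ℤ :=
  if u ≤ v then dtsmP M tsm u v else - dtsmP M tsm v u

/-- `(u,v)` is `tsm`-big. -/
def TsmBig (M : ℤ) (tsm : ℕ → ℤ) (u v : ℕ) : Prop :=
  ∃ w1 w2 : ℕ, u ≤ w1 ∧ w1 < w2 ∧ w2 ≤ v ∧ M ≤ dtsm M tsm u w1 + dtsm M tsm w1 w2

/-- `tsm` is a time-stamping modulo `M` on vertices `{1,…,n}`. -/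
def TSM (M : ℤ) (n : ℕ) (tsm : ℕ → ℤ) : Prop :=
  ∀ v, 1 ≤ v → v ≤ n → 0 ≤ tsm v ∧ tsm v < M

/-- `tsm` weakly satisfies the graph (forward/backward conditions). -/
def WeaklySat (M : ℤ) (E : Finset WEdge) (tsm : ℕ → ℤ) : Prop :=
  ∀ e ∈ E,
    (e.src ≤ e.tgt → ¬ TsmBig M tsm e.src e.tgt ∧ dtsm M tsm e.src e.tgt ≤ e.wt) ∧
    (e.tgt < e.src → TsmBig M tsm e.tgt e.src ∨ - e.wt ≤ dtsm M tsm e.tgt e.src)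

/-- `(u,v) ∈ geqFr`: fractional part of `ts u` must be ≥ that of `ts v`. -/
def geqFr (M : ℤ) (tsm : ℕ → ℤ) (E : Finset WEdge) (u v : ℕ) : Prop :=
  (∃ e ∈ E, e.src = u ∧ e.tgt = v ∧ dtsmE M tsm u v = e.wt) ∨
  (v + 1 = u ∧ dtsmE M tsm u v = 0)

/-- `(u,v) ∈ gtFr`: fractional part of `ts u` must be > that of `ts v`. -/
def gtFr (M : ℤ) (tsm : ℕ → ℤ) (E : Finset WEdge) (u v : ℕ) : Prop :=
  ∃ e ∈ E, e.strict = true ∧ e.src = u ∧ e.tgt = v ∧ dtsmE M tsm u v = e.wt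

open Classical in
/-- Number of `gtFr` edges used by the path `p 0, p 1, …, p k`. -/
noncomputable def gtCount (M : ℤ) (tsm : ℕ → ℤ) (E : Finset WEdge) (k : ℕ) (p : ℕ → ℕ) : ℕ :=
  ((Finset.range k).filter (fun i => gtFr M tsm E (p i) (p (i + 1)))).card

theorem dtsmP_eq_min_floor_diff (M : ℤ) (hM : 1 ≤ M) (n : ℕ) (ts : ℕ → ℝ)
    (hsm : SlowlyMonotone M n ts) (tsm : ℕ → ℤ) (htsm : ∀ v, tsm v = ⌊ts v⌋ % M)
    (u v : ℕ) (hu : 1 ≤ u) (huv : u ≤ v) (hv : v ≤ n) :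
    dtsmP M tsm u v = min (⌊ts v⌋ - ⌊ts u⌋) M := by
  have key : ∑ i ∈ Finset.Ico u v, dtsm M tsm i (i + 1) = ⌊ts v⌋ - ⌊ts u⌋ := by
    induction v, huv using Nat.le_induction with
    | base => simp
    | succ w hw ih =>
      have hwn : w < n := Nat.lt_of_succ_le hv
      have hw1 : 1 ≤ w := le_trans hu hw
      have hsum := ih (le_of_lt hwn)
      have hd : dtsm M tsm w (w + 1) = ⌊ts (w + 1)⌋ - ⌊ts w⌋ := by
        obtain ⟨h0, h1⟩ := hsm w hw1 hwn
        have : dtsm M tsm w (w + 1) = (⌊ts (w + 1)⌋ - ⌊ts w⌋) % M := by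
          unfold dtsm
          rw [htsm, htsm, Int.sub_emod, Int.emod_emod_of_dvd _ dvd_rfl,
            Int.emod_emod_of_dvd _ dvd_rfl, ← Int.sub_emod]
        rw [this, Int.emod_eq_of_lt h0 (by omega)]
      rw [Finset.sum_Ico_succ_top hw, hsum, hd]; ring
  unfold dtsmP
  rw [key, min_comm]
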